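/- Let m, L, d be positive integers and 0 ≤ w_s ≤ L. Then S(m,L,d,w_s) ≥ (Σ_{i=w_s}^{L} C(L,i))^m · A(mL,d) / 2^{mL}, where C(a,b) denotes the binomial coefficient. Equivalently, for every set 𝒞 of binary words of length mL with pairwise Hamming distance at least d, there exists a translate x + 𝒞 (coordinatewise XOR by a word x of length mL) such that |𝒮(m,L,w_s) ∩ (x + 𝒞)| ≥ |𝒮(m,L,w_s)|·|𝒞| / 2^{mL}, and this intersection is an (m,L,d,w_s)-SECC. -/

import Mathlib

open Finset Filter

/-- Weight (number of ones) of a binary word. -/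
def wt {n : ℕ} (x : Fin n → Bool) : ℕ := (Finset.univ.filter fun i => x i = true).card

/-- The index (in a word of length `m * L`) of position `j` of subblock `i`. -/
def subIdx (m L : ℕ) (i : Fin m) (j : Fin L) : Fin (m * L) :=
  ⟨i.val * L + j.val, by
    have hj : j.val < L := j.isLt
    have hi : i.val + 1 ≤ m := i.isLt
    calc i.val * L + j.val < i.val * L + L := Nat.add_lt_add_left hj _
      _ = (i.val + 1) * L := by ring
      _ ≤ m * L := Nat.mul_le_mul hi (Nat.le_refl L)⟩

/-- The `i`-th subblock (of length `L`) of a binary word of length `m * L`. -/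
def subblock (m L : ℕ) (x : Fin (m * L) → Bool) (i : Fin m) : Fin L → Bool :=
  fun j => x (subIdx m L i j)

/-- The CSCC space: binary words of length `m * L` each of whose `m` subblocks of
length `L` has weight exactly `w`. -/
def CSCCspace (m L w : ℕ) : Set (Fin (m * L) → Bool) :=
  {x | ∀ i : Fin m, wt (subblock m L x i) = w}

/-- The SECC space: binary words of length `m * L` each of whose `m` subblocks of
length `L` has weight at least `w`. -/
def SECCspace (m L w : ℕ) : Set (Fin (m * L) → Bool) :=
  {x | ∀ i : Fin m, w ≤ wt (subblock m L x i)}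

/-- A code with minimum distance `d` inside the space `Sp`. -/
def isCode {n : ℕ} (Sp : Set (Fin n → Bool)) (d : ℕ) (C : Finset (Fin n → Bool)) : Prop :=
  (↑C : Set (Fin n → Bool)) ⊆ Sp ∧ ∀ x ∈ C, ∀ y ∈ C, x ≠ y → d ≤ hammingDist x y

/-- The ball of radius `t` around `x`, taken inside the space `Sp`. -/
def ball {n : ℕ} (Sp : Set (Fin n → Bool)) (x : Fin n → Bool) (t : ℕ) :
    Set (Fin n → Bool) :=
  {y | y ∈ Sp ∧ hammingDist x y ≤ t}

/-- `C(m,L,d,w)`: the maximum size of an `(m,L,d,w)`-CSCC. -/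
noncomputable def maxCSCC (m L d w : ℕ) : ℕ :=
  sSup {k | ∃ C : Finset (Fin (m * L) → Bool), isCode (CSCCspace m L w) d C ∧ C.card = k}

/-- `S(m,L,d,w)`: the maximum size of an `(m,L,d,w)`-SECC. -/
noncomputable def maxSECC (m L d w : ℕ) : ℕ :=
  sSup {k | ∃ C : Finset (Fin (m * L) → Bool), isCode (SECCspace m L w) d C ∧ C.card = k}

/-- `A(n,d,w)`: the maximum size of a constant weight code. -/
noncomputable def maxCWC (n d w : ℕ) : ℕ :=
  sSup {k | ∃ C : Finset (Fin n → Bool), isCode {x | wt x = w} d C ∧ C.card = k}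

/-- `H(n,d,w)`: the maximum size of a heavy weight code. -/
noncomputable def maxHWC (n d w : ℕ) : ℕ :=
  sSup {k | ∃ C : Finset (Fin n → Bool), isCode {x | w ≤ wt x} d C ∧ C.card = k}

/-- `A(n,d)`: the maximum size of a binary code of length `n` and distance `d`. -/
noncomputable def maxBinary (n d : ℕ) : ℕ :=
  sSup {k | ∃ C : Finset (Fin n → Bool),
    (∀ x ∈ C, ∀ y ∈ C, x ≠ y → d ≤ hammingDist x y) ∧ C.card = k}

/-- `A_q(n,d)`: the maximum size of a `q`-ary code of length `n` and distance `d`. -/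
noncomputable def maxQary (q n d : ℕ) : ℕ :=
  sSup {k | ∃ C : Finset (Fin n → Fin q),
    (∀ x ∈ C, ∀ y ∈ C, x ≠ y → d ≤ hammingDist x y) ∧ C.card = k}

/-- The size of a radius-`r` CSCC ball: the sum over all tuples `(u_1, …, u_m)` with
`0 ≤ u_i ≤ min{w, L-w}` and `2(u_1 + ⋯ + u_m) ≤ r` of `∏ i, C(w,u_i)·C(L-w,u_i)`. -/
def csccBallSize (m L w r : ℕ) : ℕ :=
  ∑ u ∈ (Finset.univ : Finset (Fin m → Fin (min w (L - w) + 1))).filter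
      (fun u => 2 * (∑ i, (u i : ℕ)) ≤ r),
    ∏ i, (w.choose (u i : ℕ)) * ((L - w).choose (u i : ℕ))

/-- The binary entropy function (base-2 logarithms, `h 0 = h 1 = 0`). -/
noncomputable def binent (p : ℝ) : ℝ :=
  -(p * Real.logb 2 p) - (1 - p) * Real.logb 2 (1 - p)

/-- The asymptotic CSCC rate `γ(L,δ,w/L)`. -/
noncomputable def gammaRate (L : ℕ) (δ : ℝ) (w : ℕ) : ℝ :=
  Filter.limsup (fun m : ℕ =>
    Real.logb 2 (maxCSCC m L ⌊(m : ℝ) * L * δ⌋₊ w) / ((m : ℝ) * L)) Filter.atTop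

/-- The asymptotic SECC rate `σ(L,δ,w/L)`. -/
noncomputable def sigmaRate (L : ℕ) (δ : ℝ) (w : ℕ) : ℝ :=
  Filter.limsup (fun m : ℕ =>
    Real.logb 2 (maxSECC m L ⌊(m : ℝ) * L * δ⌋₊ w) / ((m : ℝ) * L)) Filter.atTop

/-!
Translating a code `C` of length `n = m * L` by `x` means adding `x` in the Boolean ring
`Fin n → Bool`, i.e. coordinatewise XOR; this preserves Hamming distances. Every word lies in
exactly `|C|` translates `x + C`, so the intersections `S ∩ (x + C)` with the SECC space `S` have
total size `|S| |C|` over the `2 ^ n` words `x`, and one of them is at least the average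
`|S| |C| / 2 ^ n`. Here `|S| = (Σ_{i ≥ w} C(L, i)) ^ m` since the subblocks vary independently.
-/

open Pointwise

lemma wt_le {n : ℕ} (x : Fin n → Bool) : wt x ≤ n := by
  simpa [wt] using card_filter_le (univ : Finset (Fin n)) (fun i => x i = true)

lemma card_filter_wt_eq (L i : ℕ) : #{y : Fin L → Bool | wt y = i} = L.choose i := by
  have hchoose : L.choose i = #(powersetCard i (univ : Finset (Fin L))) := by simp
  rw [hchoose]
  refine card_nbij' (fun y => ({j | y j = true} : Finset (Fin L))) (fun s j => decide (j ∈ s))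
    ?_ ?_ ?_ ?_
  · intro y hy
    simp only [mem_coe, mem_filter, mem_univ, true_and, mem_powersetCard, subset_univ] at hy ⊢
    exact hy
  · intro s hs
    simp only [mem_coe, mem_filter, mem_univ, true_and, mem_powersetCard] at hs ⊢
    simpa [wt] using hs.2
  · intro y _
    funext j
    simp
  · intro s _
    ext j
    simp

lemma card_filter_le_wt (L w : ℕ) :
    #{y : Fin L → Bool | w ≤ wt y} = ∑ i ∈ Icc w L, L.choose i := by
  rw [card_eq_sum_card_fiberwise (f := wt) (t := Icc w L)
    (fun y hy => mem_Icc.2 ⟨(mem_filter.1 hy).2, wt_le y⟩)]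
  refine sum_congr rfl fun i hi => ?_
  rw [filter_filter, ← card_filter_wt_eq]
  congr 1
  exact filter_congr fun y _ => ⟨fun h => h.2, fun h => ⟨h ▸ (mem_Icc.1 hi).1, h⟩⟩

lemma subIdx_eq_finProdFinEquiv (m L : ℕ) (i : Fin m) (j : Fin L) :
    subIdx m L i j = finProdFinEquiv (i, j) :=
  Fin.ext <| by simp [subIdx, finProdFinEquiv, Nat.add_comm, Nat.mul_comm]

def subblockEquiv (m L : ℕ) : (Fin (m * L) → Bool) ≃ (Fin m → Fin L → Bool) :=
  (finProdFinEquiv.arrowCongr (Equiv.refl Bool)).symm.trans (Equiv.curry _ _ _)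

lemma subblockEquiv_apply (m L : ℕ) (x : Fin (m * L) → Bool) :
    subblockEquiv m L x = subblock m L x := by
  funext i j
  simp [subblockEquiv, subblock, subIdx_eq_finProdFinEquiv]

lemma card_SECCspace (m L w : ℕ) [DecidablePred (· ∈ SECCspace m L w)] :
    #{x | x ∈ SECCspace m L w} = (∑ i ∈ Icc w L, L.choose i) ^ m := by
  rw [← card_filter_le_wt, ← Fin.prod_const, ← Fintype.card_piFinset]
  refine card_equiv (subblockEquiv m L) fun x => ?_
  simp only [mem_filter, mem_univ, true_and, Fintype.mem_piFinset, subblockEquiv_apply]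
  rfl

lemma Finset.sum_card_inter_vadd {G : Type*} [AddGroup G] [Fintype G] [DecidableEq G]
    (S C : Finset G) : ∑ x : G, #(S ∩ (x +ᵥ C)) = #S * #C := by
  simp_rw [card_inter_vadd, addConvolution]
  rw [← card_neg C, ← card_product,
    card_eq_sum_card_fiberwise (f := fun ab => ab.1 + ab.2) (t := univ) (by simp)]

lemma Finset.exists_card_inter_vadd_ge {G : Type*} [AddGroup G] [Fintype G] [DecidableEq G]
    (S C : Finset G) : ∃ x : G, (#S * #C : ℝ) / Fintype.card G ≤ #(S ∩ (x +ᵥ C)) := by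
  have hsum : ∑ _x : G, (#S * #C : ℝ) / Fintype.card G = ∑ x : G, (#(S ∩ (x +ᵥ C)) : ℝ) := by
    rw [sum_const, card_univ, nsmul_eq_mul, mul_div_cancel₀ _ (by positivity),
      ← Nat.cast_sum, sum_card_inter_vadd, Nat.cast_mul]
  obtain ⟨x, -, hx⟩ := exists_le_of_sum_le univ_nonempty hsum.le
  exact ⟨x, hx⟩

lemma hammingDist_add_left {ι G : Type*} [Fintype ι] [AddGroup G] [DecidableEq G]
    (x a b : ι → G) : hammingDist (x + a) (x + b) = hammingDist a b :=
  hammingDist_comp (fun i => (x i + ·)) fun i => add_right_injective (x i)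

lemma isCode_inter_vadd {n d : ℕ} {Sp : Set (Fin n → Bool)} {S C : Finset (Fin n → Bool)}
    (hS : ↑S ⊆ Sp) (hC : ∀ x ∈ C, ∀ y ∈ C, x ≠ y → d ≤ hammingDist x y) (x : Fin n → Bool) :
    isCode Sp d (S ∩ (x +ᵥ C)) := by
  refine ⟨subset_trans (by simp) hS, ?_⟩
  simp only [mem_inter, mem_vadd_finset, vadd_eq_add]
  rintro _ ⟨-, a, ha, rfl⟩ _ ⟨-, b, hb, rfl⟩ hab
  rw [hammingDist_add_left]
  exact hC a ha b hb (ne_of_apply_ne (x + ·) hab)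

lemma bddAbove_card_codes {n : ℕ} (P : Finset (Fin n → Bool) → Prop) :
    BddAbove {k | ∃ C : Finset (Fin n → Bool), P C ∧ #C = k} := by
  refine ⟨2 ^ n, ?_⟩
  rintro k ⟨C, -, rfl⟩
  simpa using card_le_univ C

lemma exists_card_eq_maxBinary (n d : ℕ) : ∃ C : Finset (Fin n → Bool),
    (∀ x ∈ C, ∀ y ∈ C, x ≠ y → d ≤ hammingDist x y) ∧ #C = maxBinary n d := by
  refine Nat.sSup_mem ?_ (bddAbove_card_codes _)
  exact ⟨0, ∅, by simp⟩

lemma card_le_maxSECC {m L d w : ℕ} {C : Finset (Fin (m * L) → Bool)}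
    (hC : isCode (SECCspace m L w) d C) : #C ≤ maxSECC m L d w :=
  le_csSup (bddAbove_card_codes _) ⟨C, hC, rfl⟩

theorem stmt_5_general (m L d w : ℕ) :
    ((∑ i ∈ Finset.Icc w L, L.choose i : ℕ) : ℝ) ^ m * (maxBinary (m * L) d : ℝ) /
        2 ^ (m * L)
      ≤ (maxSECC m L d w : ℝ) := by
  classical
  obtain ⟨C, hC, hCcard⟩ := exists_card_eq_maxBinary (m * L) d
  set S : Finset (Fin (m * L) → Bool) := {x | x ∈ SECCspace m L w}
  obtain ⟨x, hx⟩ := S.exists_card_inter_vadd_ge C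
  have hcode : isCode (SECCspace m L w) d (S ∩ (x +ᵥ C)) :=
    isCode_inter_vadd (by simp [S]) hC x
  calc _ = (#S * #C : ℝ) / Fintype.card (Fin (m * L) → Bool) := by
          simp [S, card_SECCspace, hCcard]
    _ ≤ #(S ∩ (x +ᵥ C)) := hx
    _ ≤ maxSECC m L d w := by exact_mod_cast card_le_maxSECC hcode

/-- Elias–Bassalygo type bound for SECCs:
`S(m,L,d,w) ≥ (Σ_{i=w}^{L} C(L,i))^m · A(mL,d) / 2^{mL}`. -/
theorem stmt_5 (m L d w : ℕ) (hm : 0 < m) (hL : 0 < L) (hd : 0 < d) (hw : w ≤ L) :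
    ((∑ i ∈ Finset.Icc w L, L.choose i : ℕ) : ℝ) ^ m * (maxBinary (m * L) d : ℝ) /
        2 ^ (m * L)
      ≤ (maxSECC m L d w : ℝ) :=
  stmt_5_general m L d w
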